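/- arXiv:0804.4138 — 9 statements merged into one kernel-verified Lean document; each statement's English description precedes it below -/
import Mathlib

section
/- Let x be a probability distribution on n elements, α > 1 with α ≤ 1 + 1/(2 ln n), and define the perturbed distribution x(α) by x(α)_i = x_i^α / ∑_j x_j^α. Then ‖x - x(α)‖_1 = ∑_i |x_i - x(α)_i| ≤ 4(α-1)·H_1(x), where H_1(x) = -∑_i x_i ln x_i. -/
theorem escort_l1_bound (n : ℕ) (x : Fin n → ℝ) (α : ℝ)
    (hx : ∀ i, 0 ≤ x i) (hsum : ∑ i, x i = 1)
    (hα : 1 < α) (hα' : α ≤ 1 + 1 / (2 * Real.log n)) :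
    ∑ i, |x i - x i ^ α / (∑ j, x j ^ α)| ≤
      4 * (α - 1) * (-∑ i, x i * Real.log (x i)) := by
  have hα0 : (0:ℝ) < α := by linarith
  have hx1 : ∀ i, x i ≤ 1 := by
    intro i
    calc x i ≤ ∑ j, x j := Finset.single_le_sum (fun j _ => hx j) (Finset.mem_univ i)
      _ = 1 := hsum
  have hlog : ∀ i, x i * Real.log (x i) ≤ 0 := fun i =>
    mul_nonpos_of_nonneg_of_nonpos (hx i) (Real.log_nonpos (hx i) (hx1 i))
  have hH : 0 ≤ -∑ i, x i * Real.log (x i) := by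
    rw [neg_nonneg]
    exact Finset.sum_nonpos (fun i _ => hlog i)
  set S := ∑ j, x j ^ α with hS
  have hterm_nonneg : ∀ i, 0 ≤ x i ^ α := fun i => Real.rpow_nonneg (hx i) α
  have hSpos : 0 < S := by
    obtain ⟨i, hi⟩ : ∃ i, 0 < x i := by
      by_contra h
      push_neg at h
      have hz : ∀ i, x i = 0 := fun i => le_antisymm (h i) (hx i)
      simp [hz] at hsum
    exact Finset.sum_pos' (fun j _ => hterm_nonneg j)
      ⟨i, Finset.mem_univ i, Real.rpow_pos_of_pos hi α⟩
  have hterm_le : ∀ i, x i ^ α ≤ x i := by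
    intro i
    rcases eq_or_lt_of_le (hx i) with h | h
    · simp [← h, Real.zero_rpow (ne_of_gt hα0)]
    · calc x i ^ α ≤ x i ^ (1:ℝ) :=
          Real.rpow_le_rpow_of_exponent_ge h (hx1 i) (le_of_lt hα)
        _ = x i := Real.rpow_one _
  have hSle : S ≤ 1 := by
    calc S ≤ ∑ i, x i := Finset.sum_le_sum (fun i _ => hterm_le i)
      _ = 1 := hsum
  have hkey : ∀ i, x i + (α - 1) * (x i * Real.log (x i)) ≤ x i ^ α := by
    intro i
    rcases eq_or_lt_of_le (hx i) with h | h
    · simp [← h, Real.zero_rpow (ne_of_gt hα0)]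
    · have h1 : x i ^ α = x i * Real.exp ((α - 1) * Real.log (x i)) := by
        have : x i ^ α = x i ^ ((1:ℝ) + (α - 1)) := by ring_nf
        rw [this, Real.rpow_add h, Real.rpow_one, Real.rpow_def_of_pos h,
          mul_comm (Real.log (x i)) (α - 1)]
      have h2 : 1 + (α - 1) * Real.log (x i) ≤ Real.exp ((α - 1) * Real.log (x i)) :=
        by linarith [Real.add_one_le_exp ((α - 1) * Real.log (x i))]
      calc x i + (α - 1) * (x i * Real.log (x i))
          = x i * (1 + (α - 1) * Real.log (x i)) := by ring
        _ ≤ x i * Real.exp ((α - 1) * Real.log (x i)) :=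
            mul_le_mul_of_nonneg_left h2 (le_of_lt h)
        _ = x i ^ α := h1.symm
  have hSbound : 1 + (α - 1) * (∑ i, x i * Real.log (x i)) ≤ S := by
    calc 1 + (α - 1) * (∑ i, x i * Real.log (x i))
        = ∑ i, (x i + (α - 1) * (x i * Real.log (x i))) := by
          rw [Finset.sum_add_distrib, hsum, Finset.mul_sum]
      _ ≤ S := Finset.sum_le_sum (fun i _ => hkey i)
  have htri : ∑ i, |x i - x i ^ α / S| ≤ 2 * (1 - S) := by
    have hbd : ∀ i, |x i - x i ^ α / S| ≤ (x i - x i ^ α) + (x i ^ α / S - x i ^ α) := by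
      intro i
      have h1 : x i ^ α ≤ x i ^ α / S := by
        rw [le_div_iff₀ hSpos]
        nlinarith [hterm_nonneg i]
      calc |x i - x i ^ α / S|
          ≤ |x i - x i ^ α| + |x i ^ α - x i ^ α / S| := abs_sub_le _ _ _
        _ = (x i - x i ^ α) + (x i ^ α / S - x i ^ α) := by
            rw [abs_of_nonneg (by linarith [hterm_le i]), abs_sub_comm,
              abs_of_nonneg (by linarith)]
    calc ∑ i, |x i - x i ^ α / S|
        ≤ ∑ i, ((x i - x i ^ α) + (x i ^ α / S - x i ^ α)) :=
          Finset.sum_le_sum (fun i _ => hbd i)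
      _ = 2 * (1 - S) := by
          rw [Finset.sum_add_distrib, Finset.sum_sub_distrib, Finset.sum_sub_distrib,
            hsum, ← Finset.sum_div, ← hS, div_self (ne_of_gt hSpos)]
          ring
  have hfin : 2 * (1 - S) ≤ 4 * (α - 1) * (-∑ i, x i * Real.log (x i)) := by
    nlinarith [hH, hSbound]
  linarith [htri]
end

section
/- Let y and z be probability distributions on n elements with ‖y - z‖_1 ≤ 1/2. Then |H_1(y) - H_1(z)| ≤ ‖y-z‖_1 · log(n / ‖y-z‖_1), where H_1 denotes Shannon entropy and ‖y-z‖_1 = ∑_i |y_i - z_i|. -/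
/-!
With `η x = -x log x` concave on `[0, ∞)` and `η 0 = η 1 = 0`, comparing `η` at the pairs
`(0, b + t)` and `(b, t)`, and at `(b, 1)` and `(b + t, 1 - t)`, gives
`η (b + t) - η b ≤ η t` and `η b - η (b + t) ≤ η (1 - t)`; for `t ≤ 1/2` also `η (1 - t) ≤ η t`.
Hence `|η y_i - η z_i| ≤ η |y_i - z_i|` coordinatewise, and Jensen's inequality for `η` with uniform
weights bounds `∑ η |y_i - z_i|` by `δ log (n / δ)`, where `δ = ∑ |y_i - z_i|`.
-/

open Real Finset

/-- Karamata's inequality for two points: `(x, w)` majorizes `(y, z)`. -/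
theorem ConcaveOn.map_add_map_le_of_add_eq {𝕜 : Type*} [Field 𝕜] [LinearOrder 𝕜]
    [IsStrictOrderedRing 𝕜] {s : Set 𝕜} {f : 𝕜 → 𝕜} (hf : ConcaveOn 𝕜 s f)
    {x y z w : 𝕜} (hx : x ∈ s) (hw : w ∈ s) (hxy : x ≤ y) (hyw : y ≤ w) (hsum : y + z = x + w) :
    f x + f w ≤ f y + f z := by
  rcases hxy.trans hyw |>.eq_or_lt with rfl | hxw
  · obtain rfl : y = x := le_antisymm hyw hxy
    obtain rfl : z = y := by linarith
    rfl
  have hwx : 0 < w - x := sub_pos.2 hxw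
  have hy : (w - y) / (w - x) * x + (y - x) / (w - x) * w = y := by
    field_simp; ring
  have hz : (y - x) / (w - x) * x + (w - y) / (w - x) * w = z := by
    rw [show z = x + w - y by linarith]; field_simp; ring
  have ha : 0 ≤ (w - y) / (w - x) := div_nonneg (sub_nonneg.2 hyw) hwx.le
  have hb : 0 ≤ (y - x) / (w - x) := div_nonneg (sub_nonneg.2 hxy) hwx.le
  have hab : (w - y) / (w - x) + (y - x) / (w - x) = 1 := by field_simp; ring
  have hfy := hf.2 hx hw ha hb hab
  have hfz := hf.2 hx hw hb ha (by rw [add_comm, hab])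
  simp only [smul_eq_mul] at hfy hfz
  rw [hy] at hfy
  rw [hz] at hfz
  calc f x + f w = ((w - y) / (w - x) + (y - x) / (w - x)) * (f x + f w) := by rw [hab, one_mul]
    _ ≤ f y + f z := by linarith

namespace Real

theorem negMulLog_add_le {a b : ℝ} (ha : 0 ≤ a) (hb : 0 ≤ b) :
    negMulLog (a + b) ≤ negMulLog a + negMulLog b := by
  simpa using concaveOn_negMulLog.map_add_map_le_of_add_eq (x := 0) (w := a + b)
    Set.self_mem_Ici (add_nonneg ha hb) ha (by linarith) (zero_add _).symm

theorem negMulLog_le_negMulLog_add_add_negMulLog_one_sub {b t : ℝ} (hb : 0 ≤ b) (ht : 0 ≤ t)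
    (hbt : b + t ≤ 1) : negMulLog b ≤ negMulLog (b + t) + negMulLog (1 - t) := by
  simpa using concaveOn_negMulLog.map_add_map_le_of_add_eq (x := b) (w := 1)
    hb (Set.mem_Ici.2 zero_le_one) (by linarith) hbt (by ring)

/-- Since `log` is concave, the slope `log x / (x - 1)` of its secant through `1` is antitone; compare
it at `t ≤ 1 - t`. -/
theorem negMulLog_one_sub_le {t : ℝ} (ht : 0 ≤ t) (ht2 : t ≤ 1 / 2) :
    negMulLog (1 - t) ≤ negMulLog t := by
  rcases ht.eq_or_lt with rfl | ht
  · simp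
  have hslope := strictConcaveOn_log_Ioi.concaveOn.neg.secant_mono (a := 1) (x := t) (y := 1 - t)
    (Set.mem_Ioi.2 one_pos) ht (by simp; linarith) (by linarith) (by linarith) (by linarith)
  simp only [Pi.neg_apply, log_one, neg_zero, sub_zero, sub_sub_cancel_left] at hslope
  rw [← neg_sub 1 t, neg_div_neg_eq, neg_div_neg_eq, div_le_div_iff₀ (by linarith) ht] at hslope
  simp only [negMulLog, neg_mul]
  linarith

theorem abs_negMulLog_sub_negMulLog_le {a b : ℝ} (ha : 0 ≤ a) (ha1 : a ≤ 1) (hb : 0 ≤ b)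
    (hb1 : b ≤ 1) (hab : |a - b| ≤ 1 / 2) :
    |negMulLog a - negMulLog b| ≤ negMulLog |a - b| := by
  wlog hba : b ≤ a generalizing a b
  · simpa only [abs_sub_comm] using this hb hb1 ha ha1 (by rwa [abs_sub_comm]) (le_of_not_ge hba)
  obtain ⟨t, ht, rfl⟩ : ∃ t, 0 ≤ t ∧ a = b + t := ⟨a - b, by linarith, by ring⟩
  rw [add_sub_cancel_left, abs_of_nonneg ht] at hab ⊢
  have hupper := negMulLog_add_le hb ht
  have hlower := negMulLog_le_negMulLog_add_add_negMulLog_one_sub hb ht ha1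
  have hsymm := negMulLog_one_sub_le ht hab
  rw [abs_le]
  constructor <;> linarith

/-- Jensen's inequality for `negMulLog` with uniform weights. -/
theorem sum_negMulLog_le {ι : Type*} [Fintype ι] {x : ι → ℝ} (hx : ∀ i, 0 ≤ x i) :
    ∑ i, negMulLog (x i) ≤ (∑ i, x i) * log (Fintype.card ι / ∑ i, x i) := by
  rcases isEmpty_or_nonempty ι with hι | hι
  · simp
  have hn : (0 : ℝ) < Fintype.card ι := by exact_mod_cast Fintype.card_pos
  have hjensen := concaveOn_negMulLog.le_map_sum (t := univ) (w := fun _ ↦ (Fintype.card ι : ℝ)⁻¹)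
    (p := x) (fun _ _ ↦ by positivity) (by simp [card_univ, hn.ne']) (fun i _ ↦ hx i)
  simp only [smul_eq_mul, ← mul_sum] at hjensen
  calc ∑ i, negMulLog (x i)
      = Fintype.card ι * ((Fintype.card ι : ℝ)⁻¹ * ∑ i, negMulLog (x i)) := by field_simp
    _ ≤ Fintype.card ι * negMulLog ((Fintype.card ι : ℝ)⁻¹ * ∑ i, x i) := by gcongr
    _ = (∑ i, x i) * log (Fintype.card ι / ∑ i, x i) := by
      rw [negMulLog, neg_mul_comm, ← log_inv, mul_inv, inv_inv, ← div_eq_mul_inv]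
      field_simp

end Real

theorem entropy_l1_continuity (n : ℕ) (y z : Fin n → ℝ)
    (hy : ∀ i, 0 ≤ y i) (hz : ∀ i, 0 ≤ z i)
    (hys : ∑ i, y i = 1) (hzs : ∑ i, z i = 1)
    (hd : ∑ i, |y i - z i| ≤ 1 / 2) :
    |(-∑ i, y i * Real.log (y i)) - (-∑ i, z i * Real.log (z i))| ≤
      (∑ i, |y i - z i|) * Real.log ((n : ℝ) / ∑ i, |y i - z i|) := by
  have hy1 i : y i ≤ 1 := hys ▸ single_le_sum (fun j _ ↦ hy j) (mem_univ i)
  have hz1 i : z i ≤ 1 := hzs ▸ single_le_sum (fun j _ ↦ hz j) (mem_univ i)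
  have hyz i : |y i - z i| ≤ 1 / 2 :=
    (single_le_sum (f := fun j ↦ |y j - z j|) (fun j _ ↦ abs_nonneg _) (mem_univ i)).trans hd
  have hentropy : (-∑ i, y i * log (y i)) - (-∑ i, z i * log (z i)) =
      ∑ i, (negMulLog (y i) - negMulLog (z i)) := by
    simp only [negMulLog, neg_mul, sum_sub_distrib, sum_neg_distrib]
  calc _ ≤ ∑ i, |negMulLog (y i) - negMulLog (z i)| := hentropy ▸ abs_sum_le_sum_abs _ _
    _ ≤ ∑ i, negMulLog |y i - z i| := sum_le_sum fun i _ ↦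
        abs_negMulLog_sub_negMulLog_le (hy i) (hy1 i) (hz i) (hz1 i) (hyz i)
    _ ≤ _ := by simpa using sum_negMulLog_le fun i ↦ abs_nonneg (y i - z i)
end

section
/- Let P_k be the Chebyshev polynomial of the first kind of degree k, defined by P_0(x)=1, P_1(x)=x, P_k(x) = 2x·P_{k-1}(x) - P_{k-2}(x). If p is a real polynomial of degree at most k satisfying |p(cos(jπ/k))| ≤ 1 for all 0 ≤ j ≤ k, then for every real t with |t| ≥ 1 we have |p(t)| ≤ |P_k(t)|. -/
open Polynomial Finset Real

private noncomputable def nd (k j : ℕ) : ℝ := Real.cos (j * Real.pi / k)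

private lemma nd_mem {k j : ℕ} (hj : j ≤ k) :
    ((j : ℝ) * π / k) ∈ Set.Icc (0:ℝ) π := by
  rcases Nat.eq_zero_or_pos k with rfl | hk
  · interval_cases j
    simp [Real.pi_pos.le]
  constructor
  · positivity
  · rw [div_le_iff₀ (by exact_mod_cast hk)]
    have hjk : (j : ℝ) ≤ k := by exact_mod_cast hj
    nlinarith [Real.pi_pos]

private lemma nd_le_one (k j : ℕ) : nd k j ≤ 1 := Real.cos_le_one _

private lemma nd_anti {k : ℕ} (hk : 0 < k) {i j : ℕ} (hij : i < j) (hj : j ≤ k) :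
    nd k j < nd k i := by
  apply Real.strictAntiOn_cos (nd_mem (le_trans hij.le hj)) (nd_mem hj)
  have hk' : (0:ℝ) < k := by exact_mod_cast hk
  have hij' : (i:ℝ) < j := by exact_mod_cast hij
  have hpi := Real.pi_pos
  exact div_lt_div_of_pos_right (by nlinarith) hk'

private lemma nd_injOn {k : ℕ} (hk : 0 < k) :
    Set.InjOn (nd k) (Finset.range (k+1) : Finset ℕ) := by
  intro i hi j hj hij
  simp only [Finset.coe_range, Set.mem_Iio] at hi hj
  rcases lt_trichotomy i j with h | h | h
  · exact absurd hij (ne_of_gt (nd_anti hk h (Nat.lt_succ_iff.mp hj)))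
  · exact h
  · exact absurd hij (ne_of_lt (nd_anti hk h (Nat.lt_succ_iff.mp hi)))

private lemma natDegree_T_le : ∀ n : ℕ, (Chebyshev.T ℝ (n : ℤ)).natDegree ≤ n := by
  intro n
  induction n using Nat.twoStepInduction with
  | zero => simp [Chebyshev.T_zero]
  | one => simp [Chebyshev.T_one]
  | more n ih1 ih2 =>
    have h : ((n + 2 : ℕ) : ℤ) = (n : ℤ) + 2 := by push_cast; ring
    have h1 : ((n + 1 : ℕ) : ℤ) = (n : ℤ) + 1 := by push_cast; ring
    rw [h, Chebyshev.T_add_two]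
    refine le_trans (natDegree_sub_le _ _) ?_
    rw [max_le_iff]
    constructor
    · refine le_trans (natDegree_mul_le) ?_
      have hX : (2 * X : ℝ[X]).natDegree ≤ 1 :=
        le_trans natDegree_mul_le (by simp)
      have := ih2
      rw [h1] at this
      omega
    · omega

private lemma T_eval_neg : ∀ (n : ℕ) (x : ℝ),
    (Chebyshev.T ℝ (n : ℤ)).eval (-x) = (-1) ^ n * (Chebyshev.T ℝ (n : ℤ)).eval x := by
  intro n
  induction n using Nat.twoStepInduction with
  | zero => simp [Chebyshev.T_zero]
  | one => intro x; simp [Chebyshev.T_one]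
  | more n ih1 ih2 =>
    intro x
    have h : ((n + 2 : ℕ) : ℤ) = (n : ℤ) + 2 := by push_cast; ring
    have h1 : ((n + 1 : ℕ) : ℤ) = (n : ℤ) + 1 := by push_cast; ring
    rw [h, Chebyshev.T_add_two]
    simp only [eval_sub, eval_mul, eval_ofNat, eval_X]
    rw [← h1]
    rw [ih2 x, ih1 x]
    ring

private lemma T_node (k : ℕ) (j : ℕ) (hj : j ≤ k) :
    (Chebyshev.T ℝ (k : ℤ)).eval (nd k j) = (-1) ^ j := by
  rcases Nat.eq_zero_or_pos k with rfl | hk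
  · interval_cases j
    simp [Chebyshev.T_zero, nd]
  unfold nd
  rw [Chebyshev.T_real_cos]
  have hkk : (k : ℝ) ≠ 0 := by positivity
  have : ((k : ℤ) : ℝ) * ((j : ℝ) * π / k) = (j : ℝ) * π := by
    push_cast
    field_simp
  rw [this, show (j : ℝ) * π = (j : ℝ) * π - 0 by ring, Real.cos_nat_mul_pi_sub]
  simp

private lemma basis_sign {k : ℕ} (j : ℕ) (hj : j ≤ k) {t : ℝ} (ht : 1 ≤ t) :
    |(Lagrange.basis (Finset.range (k+1)) (nd k) j).eval t|
      = (-1) ^ j * (Lagrange.basis (Finset.range (k+1)) (nd k) j).eval t := by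
  rcases Nat.eq_zero_or_pos k with rfl | hk
  · interval_cases j
    simp [Lagrange.basis]
  set g : ℕ → ℝ := fun i => (nd k j - nd k i)⁻¹ * (t - nd k i) with hg
  have hev : (Lagrange.basis (Finset.range (k+1)) (nd k) j).eval t
      = ∏ i ∈ (Finset.range (k+1)).erase j, g i := by
    rw [Lagrange.basis, eval_prod]
    refine Finset.prod_congr rfl fun i _ => ?_
    simp [Lagrange.basisDivisor, hg]
  have hsplit : (Finset.range (k+1)).erase j
      = Finset.range j ∪ Finset.Ico (j+1) (k+1) := by
    ext i
    simp only [Finset.mem_erase, Finset.mem_range, Finset.mem_union, Finset.mem_Ico]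
    omega
  have hdisj : Disjoint (Finset.range j) (Finset.Ico (j+1) (k+1)) := by
    rw [Finset.disjoint_left]
    intro i h1 h2
    simp only [Finset.mem_range] at h1
    simp only [Finset.mem_Ico] at h2
    omega
  have hA : ∀ i ∈ Finset.range j, 0 ≤ -g i := by
    intro i hi
    simp only [Finset.mem_range] at hi
    have h1 : nd k j < nd k i := nd_anti hk hi hj
    have h2 : 0 ≤ t - nd k i := by
      have := nd_le_one k i; linarith
    have h3 : (nd k j - nd k i)⁻¹ ≤ 0 := inv_nonpos.mpr (by linarith)
    have : g i ≤ 0 := mul_nonpos_of_nonpos_of_nonneg h3 h2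
    linarith
  have hB : 0 ≤ ∏ i ∈ Finset.Ico (j+1) (k+1), g i := by
    refine Finset.prod_nonneg fun i hi => ?_
    simp only [Finset.mem_Ico] at hi
    have h1 : nd k i < nd k j := nd_anti hk (by omega) (by omega)
    have h2 : 0 ≤ t - nd k i := by
      have := nd_le_one k i; linarith
    exact mul_nonneg (inv_nonneg.mpr (by linarith)) h2
  have hPA : ∏ i ∈ Finset.range j, g i
      = (-1) ^ j * ∏ i ∈ Finset.range j, (-g i) := by
    have : ∀ i ∈ Finset.range j, g i = (-1) * (-g i) := fun i _ => by ring
    rw [Finset.prod_congr rfl this, Finset.prod_mul_distrib, Finset.prod_const,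
      Finset.card_range]
  have key : 0 ≤ (-1) ^ j * (Lagrange.basis (Finset.range (k+1)) (nd k) j).eval t := by
    rw [hev, hsplit, Finset.prod_union hdisj, hPA]
    have : (-1 : ℝ) ^ j * ((-1) ^ j * (∏ i ∈ Finset.range j, (-g i))
        * ∏ i ∈ Finset.Ico (j+1) (k+1), g i)
        = ((-1 : ℝ) ^ j * (-1) ^ j) * ((∏ i ∈ Finset.range j, (-g i))
        * ∏ i ∈ Finset.Ico (j+1) (k+1), g i) := by ring
    rw [this, ← pow_add, Even.neg_one_pow ⟨j, by ring⟩, one_mul]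
    exact mul_nonneg (Finset.prod_nonneg hA) hB
  calc |(Lagrange.basis (Finset.range (k+1)) (nd k) j).eval t|
      = |(-1) ^ j * (Lagrange.basis (Finset.range (k+1)) (nd k) j).eval t| := by
        rw [abs_mul, abs_pow, abs_neg, abs_one, one_pow, one_mul]
    _ = (-1) ^ j * (Lagrange.basis (Finset.range (k+1)) (nd k) j).eval t :=
        abs_of_nonneg key

private lemma core (k : ℕ) (hk : 0 < k) (p : ℝ[X]) (hdeg : p.natDegree ≤ k)
    (hbound : ∀ j : ℕ, j ≤ k → |p.eval (nd k j)| ≤ 1) (t : ℝ) (ht : 1 ≤ t) :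
    |p.eval t| ≤ |(Chebyshev.T ℝ (k : ℤ)).eval t| := by
  set s : Finset ℕ := Finset.range (k+1) with hs
  have hvs : Set.InjOn (nd k) s := nd_injOn hk
  have hcard : #s = k + 1 := Finset.card_range (k+1)
  have hpdeg : p.degree < #s := by
    refine lt_of_le_of_lt degree_le_natDegree ?_
    rw [hcard]
    exact_mod_cast Nat.lt_succ_of_le hdeg
  have hTdeg : (Chebyshev.T ℝ (k : ℤ)).degree < #s := by
    refine lt_of_le_of_lt degree_le_natDegree ?_
    rw [hcard]
    exact_mod_cast Nat.lt_succ_of_le (natDegree_T_le k)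
  have hp := Lagrange.eq_interpolate hvs hpdeg
  have hT := Lagrange.eq_interpolate hvs hTdeg
  have hevalp : p.eval t = ∑ j ∈ s, p.eval (nd k j) * (Lagrange.basis s (nd k) j).eval t := by
    conv_lhs => rw [hp]
    rw [Lagrange.interpolate_apply, eval_finset_sum]
    exact Finset.sum_congr rfl fun j _ => by rw [eval_mul, eval_C]
  have hevalT : (Chebyshev.T ℝ (k : ℤ)).eval t
      = ∑ j ∈ s, (-1 : ℝ) ^ j * (Lagrange.basis s (nd k) j).eval t := by
    conv_lhs => rw [hT]
    rw [Lagrange.interpolate_apply, eval_finset_sum]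
    refine Finset.sum_congr rfl fun j hj => ?_
    rw [eval_mul, eval_C, T_node k j (by simp only [hs, Finset.mem_range] at hj; omega)]
  calc |p.eval t|
      = |∑ j ∈ s, p.eval (nd k j) * (Lagrange.basis s (nd k) j).eval t| := by rw [hevalp]
    _ ≤ ∑ j ∈ s, |p.eval (nd k j) * (Lagrange.basis s (nd k) j).eval t| :=
        Finset.abs_sum_le_sum_abs _ _
    _ ≤ ∑ j ∈ s, (-1 : ℝ) ^ j * (Lagrange.basis s (nd k) j).eval t := by
        refine Finset.sum_le_sum fun j hj => ?_
        have hjk : j ≤ k := by simp only [hs, Finset.mem_range] at hj; omega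
        rw [abs_mul, ← basis_sign j hjk ht]
        calc |p.eval (nd k j)| * |(Lagrange.basis s (nd k) j).eval t|
            ≤ 1 * |(Lagrange.basis s (nd k) j).eval t| :=
              mul_le_mul_of_nonneg_right (hbound j hjk) (abs_nonneg _)
          _ = |(Lagrange.basis s (nd k) j).eval t| := one_mul _
    _ = (Chebyshev.T ℝ (k : ℤ)).eval t := hevalT.symm
    _ ≤ |(Chebyshev.T ℝ (k : ℤ)).eval t| := le_abs_self _

theorem chebyshev_extremal_growth (k : ℕ) (p : ℝ[X])
    (hdeg : p.natDegree ≤ k)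
    (hbound : ∀ j : ℕ, j ≤ k → |p.eval (Real.cos (j * Real.pi / k))| ≤ 1) :
    ∀ t : ℝ, 1 ≤ |t| → |p.eval t| ≤ |(Polynomial.Chebyshev.T ℝ k).eval t| := by
  intro t ht
  rcases Nat.eq_zero_or_pos k with rfl | hk
  · have hp := Polynomial.eq_C_of_natDegree_le_zero hdeg
    have h0 := hbound 0 le_rfl
    rw [hp] at h0 ⊢
    simpa [Chebyshev.T_zero] using h0
  have hbound' : ∀ j : ℕ, j ≤ k → |p.eval (nd k j)| ≤ 1 := hbound
  rcases le_abs.mp ht with h1 | h1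
  · exact core k hk p hdeg hbound' t h1
  · -- t ≤ -1
    set q := p.comp (-X) with hq
    have hqdeg : q.natDegree ≤ k := by
      rw [hq, natDegree_comp]
      simpa using hdeg
    have hqeval : ∀ x : ℝ, q.eval x = p.eval (-x) := by
      intro x; rw [hq, eval_comp]; simp
    have hqb : ∀ j : ℕ, j ≤ k → |q.eval (nd k j)| ≤ 1 := by
      intro j hj
      rw [hqeval]
      have hneg : -nd k j = nd k (k - j) := by
        unfold nd
        rw [← Real.cos_pi_sub]
        congr 1
        have hkk : (k : ℝ) ≠ 0 := by positivity
        have hcast : ((k - j : ℕ) : ℝ) = (k : ℝ) - j := by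
          rw [Nat.cast_sub hj]
        rw [hcast]
        field_simp
      rw [hneg]
      exact hbound' (k - j) (Nat.sub_le k j)
    have hcore := core k hk q hqdeg hqb (-t) (by linarith)
    rw [hqeval, neg_neg] at hcore
    have hTabs : |(Chebyshev.T ℝ (k : ℤ)).eval (-t)| = |(Chebyshev.T ℝ (k : ℤ)).eval t| := by
      rw [T_eval_neg k t, abs_mul, abs_pow, abs_neg, abs_one, one_pow, one_mul]
    rw [hTabs] at hcore
    exact hcore
end

section
/- Let P_k be the degree-k Chebyshev polynomial of the first kind, k ≥ 1, c a real number, and x = 1 + k^{-c}. Then |P_k(x)| ≤ ∏_{j=1}^k (1 + 2j/k^c) ≤ e^{2k^{2-c}}. -/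
open Polynomial

private lemma cheb_aux (e : ℝ) (he : 0 ≤ e) (j : ℕ) :
    1 ≤ (Polynomial.Chebyshev.T ℝ j).eval (1 + e) ∧
    (Polynomial.Chebyshev.T ℝ j).eval (1 + e) ≤
      (Polynomial.Chebyshev.T ℝ (j + 1)).eval (1 + e) ∧
    (Polynomial.Chebyshev.T ℝ (j + 1)).eval (1 + e) -
      (Polynomial.Chebyshev.T ℝ j).eval (1 + e) ≤
      2 * (j + 1) * e * (Polynomial.Chebyshev.T ℝ j).eval (1 + e) := by
  induction j with
  | zero =>
    simp [Polynomial.Chebyshev.T_zero, Polynomial.Chebyshev.T_one]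
    constructor <;> nlinarith
  | succ n ih =>
    obtain ⟨h1, h2, h3⟩ := ih
    have hrec : (Polynomial.Chebyshev.T ℝ ((n : ℤ) + 1 + 1)).eval (1 + e) =
        2 * (1 + e) * (Polynomial.Chebyshev.T ℝ ((n : ℤ) + 1)).eval (1 + e) -
        (Polynomial.Chebyshev.T ℝ (n : ℤ)).eval (1 + e) := by
      have := Polynomial.Chebyshev.T_add_two ℝ (n : ℤ)
      rw [show ((n : ℤ) + 2) = (n : ℤ) + 1 + 1 by ring] at this
      rw [this]; simp
    have hco : ((n + 1 : ℕ) : ℤ) = (n : ℤ) + 1 := by push_cast; ring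
    have hco2 : ((n + 1 : ℕ) : ℤ) + 1 = (n : ℤ) + 1 + 1 := by push_cast; ring
    refine ⟨?_, ?_, ?_⟩
    · rw [hco]; linarith
    · rw [hco, hrec]; nlinarith
    · rw [hco, hrec]; push_cast; nlinarith

private lemma cheb_aux2 (e : ℝ) (he : 0 ≤ e) (j : ℕ) :
    (Polynomial.Chebyshev.T ℝ j).eval (1 + e) ≤
      ∏ i ∈ Finset.Icc 1 j, (1 + 2 * (i : ℝ) * e) := by
  induction j with
  | zero => simp [Polynomial.Chebyshev.T_zero]
  | succ n ih =>
    rw [Finset.prod_Icc_succ_top (by omega : 1 ≤ n + 1)]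
    obtain ⟨h1, h2, h3⟩ := cheb_aux e he n
    have hfac : (0 : ℝ) ≤ 1 + 2 * ((n : ℝ) + 1) * e := by nlinarith
    have hT : (Polynomial.Chebyshev.T ℝ (n + 1)).eval (1 + e) ≤
        (1 + 2 * ((n : ℝ) + 1) * e) * (Polynomial.Chebyshev.T ℝ n).eval (1 + e) := by
      nlinarith
    have hprod : (1 + 2 * ((n : ℝ) + 1) * e) * (Polynomial.Chebyshev.T ℝ n).eval (1 + e) ≤
        (1 + 2 * ((n : ℝ) + 1) * e) * ∏ i ∈ Finset.Icc 1 n, (1 + 2 * (i : ℝ) * e) :=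
      mul_le_mul_of_nonneg_left ih hfac
    push_cast
    nlinarith [hT.trans hprod]

theorem chebyshev_eval_near_one (k : ℕ) (c : ℝ) (hk : 1 ≤ k) :
    |(Polynomial.Chebyshev.T ℝ k).eval (1 + (k : ℝ) ^ (-c))| ≤
      ∏ j ∈ Finset.Icc 1 k, (1 + 2 * (j : ℝ) / (k : ℝ) ^ c) ∧
    ∏ j ∈ Finset.Icc 1 k, (1 + 2 * (j : ℝ) / (k : ℝ) ^ c) ≤
      Real.exp (2 * (k : ℝ) ^ (2 - c)) := by
  have hk0 : (0 : ℝ) < k := by exact_mod_cast hk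
  have hkc : (0 : ℝ) < (k : ℝ) ^ c := Real.rpow_pos_of_pos hk0 c
  set e : ℝ := (k : ℝ) ^ (-c) with he_def
  have he : 0 < e := Real.rpow_pos_of_pos hk0 _
  have heq : ∀ j : ℕ, 1 + 2 * (j : ℝ) / (k : ℝ) ^ c = 1 + 2 * (j : ℝ) * e := by
    intro j
    rw [he_def, Real.rpow_neg hk0.le, div_eq_mul_inv]
  have hprod_eq : ∏ j ∈ Finset.Icc 1 k, (1 + 2 * (j : ℝ) / (k : ℝ) ^ c) =
      ∏ j ∈ Finset.Icc 1 k, (1 + 2 * (j : ℝ) * e) :=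
    Finset.prod_congr rfl fun j _ => heq j
  obtain ⟨h1, _, _⟩ := cheb_aux e he.le k
  constructor
  · rw [hprod_eq, abs_of_nonneg (by linarith)]
    exact cheb_aux2 e he.le k
  · -- product ≤ exp of sum ≤ exp (2 k^{2-c})
    have step1 : ∏ j ∈ Finset.Icc 1 k, (1 + 2 * (j : ℝ) / (k : ℝ) ^ c) ≤
        ∏ j ∈ Finset.Icc 1 k, Real.exp (2 * (j : ℝ) / (k : ℝ) ^ c) := by
      apply Finset.prod_le_prod
      · intro j _; positivity
      · intro j _
        have := Real.add_one_le_exp (2 * (j : ℝ) / (k : ℝ) ^ c)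
        linarith
    have step2 : ∏ j ∈ Finset.Icc 1 k, Real.exp (2 * (j : ℝ) / (k : ℝ) ^ c) =
        Real.exp (∑ j ∈ Finset.Icc 1 k, 2 * (j : ℝ) / (k : ℝ) ^ c) :=
      (Real.exp_sum _ _).symm
    have hsum : ∑ j ∈ Finset.Icc 1 k, 2 * (j : ℝ) / (k : ℝ) ^ c ≤
        2 * (k : ℝ) ^ (2 - c) := by
      have hb : ∑ j ∈ Finset.Icc 1 k, 2 * (j : ℝ) / (k : ℝ) ^ c ≤
          ∑ _j ∈ Finset.Icc 1 k, 2 * (k : ℝ) / (k : ℝ) ^ c := by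
        apply Finset.sum_le_sum
        intro j hj
        have hjk : (j : ℝ) ≤ (k : ℝ) := by
          exact_mod_cast (Finset.mem_Icc.mp hj).2
        gcongr
      have hcard : (Finset.Icc 1 k).card = k := by
        rw [Nat.card_Icc]; omega
      rw [Finset.sum_const, hcard] at hb
      have hrw : 2 * (k : ℝ) ^ (2 - c) = k • (2 * (k : ℝ) / (k : ℝ) ^ c) := by
        rw [nsmul_eq_mul, Real.rpow_sub hk0]
        have : (k : ℝ) ^ (2 : ℝ) = (k : ℝ) * (k : ℝ) := by
          rw [show (2 : ℝ) = ((2 : ℕ) : ℝ) by norm_num, Real.rpow_natCast]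
          ring
        rw [this]; field_simp
      rw [hrw]
      exact hb
    calc ∏ j ∈ Finset.Icc 1 k, (1 + 2 * (j : ℝ) / (k : ℝ) ^ c)
        ≤ Real.exp (∑ j ∈ Finset.Icc 1 k, 2 * (j : ℝ) / (k : ℝ) ^ c) := by
          rw [← step2]; exact step1
      _ ≤ Real.exp (2 * (k : ℝ) ^ (2 - c)) := Real.exp_le_exp.mpr hsum
end

section
/- Let x_1,…,x_n ∈ [0,1] with ∑ x_i = 1 and suppose x_i ≤ 5/6 for all i. Then there is a positive absolute constant C such that for all α ∈ (0,1) ∪ (1,2], |1 - ∑_{i=1}^n x_i^α| ≥ C·|α - 1|. -/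
open Real Finset

theorem gap_lower_bound_no_heavy :
    ∃ C : ℝ, 0 < C ∧
      ∀ (n : ℕ) (x : Fin n → ℝ),
        (∀ i, 0 ≤ x i) → (∀ i, x i ≤ 5 / 6) → (∑ i, x i = 1) →
        ∀ α : ℝ, ((0 < α ∧ α < 1) ∨ (1 < α ∧ α ≤ 2)) →
          C * |α - 1| ≤ |1 - ∑ i, x i ^ α| := by
  refine ⟨1/6, by norm_num, ?_⟩
  intro n x hx0 hx56 hsum α hα
  have h56 : (0:ℝ) < 5/6 := by norm_num
  have hlog : Real.log (5/6) ≤ -(1/6) := by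
    have := Real.log_le_sub_one_of_pos h56
    linarith
  rcases hα with ⟨hα0, hα1⟩ | ⟨hα1, hα2⟩
  · -- case α < 1
    set t := α - 1 with ht
    have htneg : t < 0 := by simp [ht]; linarith
    have hc : (1:ℝ) - t/6 ≤ (5/6:ℝ) ^ t := by
      have h1 : t * Real.log (5/6) + 1 ≤ Real.exp (t * Real.log (5/6)) :=
        Real.add_one_le_exp _
      have h2 : -t/6 ≤ t * Real.log (5/6) := by nlinarith
      rw [Real.rpow_def_of_pos h56, mul_comm]
      linarith
    have hterm : ∀ i, x i * ((5/6:ℝ) ^ t) ≤ x i ^ α := by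
      intro i
      rcases eq_or_lt_of_le (hx0 i) with h | h
      · rw [← h]
        simp [Real.zero_rpow (by linarith : α ≠ 0)]
      · have hle : (5/6:ℝ) ^ t ≤ (x i) ^ t :=
          Real.rpow_le_rpow_of_nonpos h (hx56 i) htneg.le
        have : x i ^ α = x i * (x i) ^ t := by
          rw [ht, ← Real.rpow_one_add' (le_of_lt h) (by linarith)]
          ring_nf
        rw [this]
        exact mul_le_mul_of_nonneg_left hle h.le
    have hsumge : (5/6:ℝ) ^ t ≤ ∑ i, x i ^ α := by
      calc (5/6:ℝ) ^ t = (∑ i, x i) * (5/6:ℝ) ^ t := by rw [hsum, one_mul]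
        _ = ∑ i, x i * (5/6:ℝ) ^ t := by rw [Finset.sum_mul]
        _ ≤ ∑ i, x i ^ α := Finset.sum_le_sum fun i _ => hterm i
    have h1 : -t/6 ≤ (∑ i, x i ^ α) - 1 := by linarith
    have heq : (1:ℝ)/6 * |α - 1| = -t/6 := by
      rw [abs_of_neg (by linarith : α - 1 < 0)]; ring
    rw [heq]
    calc -t/6 ≤ (∑ i, x i ^ α) - 1 := h1
      _ = -(1 - ∑ i, x i ^ α) := by ring
      _ ≤ |1 - ∑ i, x i ^ α| := neg_le_abs _
  · -- case α > 1
    set t := α - 1 with ht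
    have ht0 : 0 < t := by simp [ht]; linarith
    have ht1 : t ≤ 1 := by simp [ht]; linarith
    have hc : (5/6:ℝ) ^ t ≤ 1 - t/6 := by
      have hcv := convexOn_exp.2 (Set.mem_univ (0:ℝ)) (Set.mem_univ (Real.log (5/6)))
        (by linarith : (0:ℝ) ≤ 1 - t) ht0.le (by ring)
      simp only [smul_eq_mul, mul_zero, zero_add, Real.exp_zero, mul_one,
        Real.exp_log h56] at hcv
      rw [Real.rpow_def_of_pos h56, mul_comm]
      linarith
    have hterm : ∀ i, x i ^ α ≤ x i * ((5/6:ℝ) ^ t) := by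
      intro i
      rcases eq_or_lt_of_le (hx0 i) with h | h
      · rw [← h]
        simp [Real.zero_rpow (by linarith : α ≠ 0)]
      · have hle : (x i) ^ t ≤ (5/6:ℝ) ^ t :=
          Real.rpow_le_rpow h.le (hx56 i) ht0.le
        have : x i ^ α = x i * (x i) ^ t := by
          rw [ht, ← Real.rpow_one_add' (le_of_lt h) (by linarith)]
          ring_nf
        rw [this]
        exact mul_le_mul_of_nonneg_left hle h.le
    have hsumle : ∑ i, x i ^ α ≤ (5/6:ℝ) ^ t := by
      calc ∑ i, x i ^ α ≤ ∑ i, x i * (5/6:ℝ) ^ t := Finset.sum_le_sum fun i _ => hterm i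
        _ = (∑ i, x i) * (5/6:ℝ) ^ t := by rw [Finset.sum_mul]
        _ = (5/6:ℝ) ^ t := by rw [hsum, one_mul]
    have h1 : t/6 ≤ 1 - ∑ i, x i ^ α := by linarith
    have : (1:ℝ)/6 * |α - 1| = t/6 := by
      rw [abs_of_pos (by linarith : (0:ℝ) < α - 1)]; ring
    rw [this]
    exact h1.trans (le_abs_self _)
end

section
/- Let x be a probability distribution on n elements with no element of mass exceeding 5/6, and α ∈ (0,1) ∪ (1,2]. Then the Tsallis entropy T_α = (1 - ∑_i x_i^α)/(α - 1) satisfies T_α ≥ C for some positive absolute constant C. -/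
-- log(6/5) ≥ 1/6, from log t ≤ t - 1 applied to t = 5/6
lemma log_six_fifths_ge : (1/6 : ℝ) ≤ Real.log (6/5) := by
  have h : Real.log (5/6) ≤ 5/6 - 1 :=
    Real.log_le_sub_one_of_pos (by norm_num)
  have h2 : (6/5 : ℝ) = (5/6 : ℝ)⁻¹ := by norm_num
  rw [h2, Real.log_inv]
  linarith

theorem tsallis_lower_bound_no_heavy :
    ∃ C : ℝ, 0 < C ∧
      ∀ (n : ℕ) (x : Fin n → ℝ),
        (∀ i, 0 ≤ x i) → (∀ i, x i ≤ 5 / 6) → (∑ i, x i = 1) →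
        ∀ α : ℝ, ((0 < α ∧ α < 1) ∨ (1 < α ∧ α ≤ 2)) →
          C ≤ (1 - ∑ i, x i ^ α) / (α - 1) := by
  refine ⟨1/7, by norm_num, ?_⟩
  intro n x h0 hb hx1 α hα
  rcases hα with ⟨hα0, hα1⟩ | ⟨hα1, hα2⟩
  · -- case 0 < α < 1
    set s : ℝ := 1 - α with hs
    have hs0 : 0 < s := by simp [hs]; linarith
    have hs1 : s ≤ 1 := by simp [hs]; linarith
    -- per-term bound: x i * (6/5)^s ≤ x i ^ α
    have hterm : ∀ i, x i * (6/5 : ℝ) ^ s ≤ x i ^ α := by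
      intro i
      rcases eq_or_lt_of_le (h0 i) with h | h
      · rw [← h, Real.zero_rpow (ne_of_gt hα0)]; simp
      · have hxa : x i ^ α = x i * (x i ^ s)⁻¹ := by
          have e1 : α = 1 + (-s) := by simp [hs]
          rw [e1, Real.rpow_add h, Real.rpow_one, Real.rpow_neg (le_of_lt h)]
        rw [hxa]
        have hps : 0 < x i ^ s := Real.rpow_pos_of_pos h s
        have hle : x i ^ s ≤ (5/6 : ℝ) ^ s :=
          Real.rpow_le_rpow (le_of_lt h) (hb i) (le_of_lt hs0)
        have hinv : ((5/6 : ℝ) ^ s)⁻¹ ≤ (x i ^ s)⁻¹ := by gcongr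
        have h65 : (6/5 : ℝ) ^ s = ((5/6 : ℝ) ^ s)⁻¹ := by
          rw [show (6/5 : ℝ) = (5/6 : ℝ)⁻¹ by norm_num,
            Real.inv_rpow (by norm_num)]
        rw [h65]
        exact mul_le_mul_of_nonneg_left hinv (le_of_lt h)
    have hsum : (6/5 : ℝ) ^ s ≤ ∑ i, x i ^ α := by
      calc (6/5 : ℝ) ^ s = (∑ i, x i) * (6/5 : ℝ) ^ s := by rw [hx1, one_mul]
        _ = ∑ i, x i * (6/5 : ℝ) ^ s := by rw [Finset.sum_mul]
        _ ≤ ∑ i, x i ^ α := Finset.sum_le_sum (fun i _ => hterm i)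
    -- (6/5)^s ≥ 1 + s/6
    have hexp : 1 + s/6 ≤ (6/5 : ℝ) ^ s := by
      have e : (6/5 : ℝ) ^ s = Real.exp (Real.log (6/5) * s) :=
        Real.rpow_def_of_pos (by norm_num) s
      have h1 : Real.log (6/5) * s + 1 ≤ Real.exp (Real.log (6/5) * s) :=
        Real.add_one_le_exp _
      have h2 : s/6 ≤ Real.log (6/5) * s := by
        have := log_six_fifths_ge
        nlinarith
      rw [e]; linarith
    have hden : α - 1 < 0 := by linarith
    rw [le_div_iff_of_neg hden]
    have : 1 + s/6 ≤ ∑ i, x i ^ α := le_trans hexp hsum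
    have e2 : (1:ℝ)/7 * (α - 1) = -(s/7) := by simp [hs]; ring
    rw [e2]
    linarith
  · -- case 1 < α ≤ 2
    set s : ℝ := α - 1 with hs
    have hs0 : 0 < s := by simp [hs]; linarith
    have hs1 : s ≤ 1 := by simp [hs]; linarith
    have hterm : ∀ i, x i ^ α ≤ (5/6 : ℝ) ^ s * x i := by
      intro i
      rcases eq_or_lt_of_le (h0 i) with h | h
      · rw [← h, Real.zero_rpow (by positivity : α ≠ 0)]; simp
      · have hxa : x i ^ α = x i ^ s * x i := by
          have e1 : α = s + 1 := by simp [hs]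
          rw [e1, Real.rpow_add h, Real.rpow_one]
        rw [hxa]
        exact mul_le_mul_of_nonneg_right
          (Real.rpow_le_rpow (le_of_lt h) (hb i) (le_of_lt hs0)) (h0 i)
    have hsum : ∑ i, x i ^ α ≤ (5/6 : ℝ) ^ s := by
      calc ∑ i, x i ^ α ≤ ∑ i, (5/6 : ℝ) ^ s * x i :=
            Finset.sum_le_sum (fun i _ => hterm i)
        _ = (5/6 : ℝ) ^ s := by rw [← Finset.mul_sum, hx1, mul_one]
    -- (5/6)^s ≤ (1 + s/6)⁻¹
    have h1 : (0:ℝ) < 1 + s/6 := by linarith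
    have hexp : (5/6 : ℝ) ^ s ≤ (1 + s/6)⁻¹ := by
      have e : (5/6 : ℝ) ^ s = Real.exp (Real.log (5/6) * s) :=
        Real.rpow_def_of_pos (by norm_num) s
      have hlog : Real.log (5/6) = -Real.log (6/5) := by
        rw [show (5/6 : ℝ) = (6/5 : ℝ)⁻¹ by norm_num, Real.log_inv]
      have h2 : 1 + s/6 ≤ Real.exp (-(Real.log (5/6) * s)) := by
        have ha : -(Real.log (5/6) * s) + 1 ≤ Real.exp (-(Real.log (5/6) * s)) :=
          Real.add_one_le_exp _
        have hb2 : s/6 ≤ -(Real.log (5/6) * s) := by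
          rw [hlog]
          have := log_six_fifths_ge
          nlinarith
        linarith
      have e2 : Real.exp (Real.log (5/6) * s) = (Real.exp (-(Real.log (5/6) * s)))⁻¹ := by
        rw [← Real.exp_neg, neg_neg]
      rw [e, e2]
      exact inv_anti₀ h1 h2
    -- (1+s/6)⁻¹ ≤ 1 - s/7
    have hinv : (1 + s/6)⁻¹ ≤ 1 - s/7 := by
      rw [inv_le_iff_one_le_mul₀ h1]
      nlinarith
    have hden : (0:ℝ) < α - 1 := by linarith
    rw [le_div_iff₀ hden]
    have : ∑ i, x i ^ α ≤ 1 - s/7 := le_trans hsum (le_trans hexp hinv)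
    have e3 : (1:ℝ)/7 * (α - 1) = s/7 := by simp [hs]; ring
    rw [e3]
    linarith
end

section
/- For x ∈ (0, 1/3] and α ∈ (0,1), there is a positive absolute constant C₁ such that x^{α-1} ≥ 3^{1-α} ≥ 1 + C₁(1-α); consequently, if a probability distribution has an element x_i ≥ 2/3, then ∑_{j≠i} x_j^α ≥ (1 + C₁(1-α))·(1 - x_i) and ∑_{j≠i} x_j^α / (1 - x_i^α) ≥ 1 + C₁(1-α). -/
lemma aux_exp_bound (α : ℝ) (hα1 : α < 1) : 1 + 1 * (1 - α) ≤ (3 : ℝ) ^ (1 - α) := by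
  have hlog : (1 : ℝ) ≤ Real.log 3 := by
    have h3 : Real.exp 1 ≤ 3 := by
      have := Real.exp_one_lt_d9
      linarith
    calc (1 : ℝ) = Real.log (Real.exp 1) := (Real.log_exp 1).symm
    _ ≤ Real.log 3 := Real.log_le_log (Real.exp_pos 1) h3
  have h1 : (3 : ℝ) ^ (1 - α) = Real.exp ((1 - α) * Real.log 3) := by
    rw [Real.rpow_def_of_pos (by norm_num)]
    ring_nf
  rw [h1]
  have h2 : (1 - α) * Real.log 3 + 1 ≤ Real.exp ((1 - α) * Real.log 3) :=
    Real.add_one_le_exp _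
  nlinarith

lemma aux_rpow_bound (x α : ℝ) (hx : 0 < x) (hx3 : x ≤ 1 / 3) (hα1 : α < 1) :
    (3 : ℝ) ^ (1 - α) ≤ x ^ (α - 1) := by
  have hxa : x ^ (α - 1) = (x ^ (1 - α))⁻¹ := by
    rw [show α - 1 = -(1 - α) by ring, Real.rpow_neg hx.le]
  rw [hxa, le_inv_comm₀ (Real.rpow_pos_of_pos (by norm_num) _) (Real.rpow_pos_of_pos hx _)]
  have : x ^ (1 - α) ≤ (1 / 3 : ℝ) ^ (1 - α) :=
    Real.rpow_le_rpow hx.le hx3 (by linarith)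
  calc x ^ (1 - α) ≤ (1 / 3 : ℝ) ^ (1 - α) := this
  _ = ((3 : ℝ) ^ (1 - α))⁻¹ := by
      rw [one_div, Real.inv_rpow (by norm_num)]

theorem residual_power_sum_bounds :
    ∃ C₁ : ℝ, 0 < C₁ ∧
      (∀ x α : ℝ, 0 < x → x ≤ 1 / 3 → 0 < α → α < 1 →
        (3 : ℝ) ^ (1 - α) ≤ x ^ (α - 1) ∧ 1 + C₁ * (1 - α) ≤ (3 : ℝ) ^ (1 - α)) ∧
      (∀ (n : ℕ) (x : Fin n → ℝ) (i : Fin n),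
        (∀ j, 0 ≤ x j) → (∑ j, x j = 1) → 2 / 3 ≤ x i →
        ∀ α : ℝ, 0 < α → α < 1 →
          (1 + C₁ * (1 - α)) * (1 - x i) ≤ ∑ j ∈ Finset.univ.erase i, x j ^ α ∧
          (1 + C₁ * (1 - α)) * (1 - x i ^ α) ≤ ∑ j ∈ Finset.univ.erase i, x j ^ α) := by
  refine ⟨1, one_pos, fun x α hx hx3 hα0 hα1 =>
    ⟨aux_rpow_bound x α hx hx3 hα1, aux_exp_bound α hα1⟩, ?_⟩
  intro n x i hnn hsum hxi α hα0 hα1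
  have hCpos : (0 : ℝ) < 1 + 1 * (1 - α) := by linarith
  -- sum of others equals 1 - x i
  have hsplit : ∑ j ∈ Finset.univ.erase i, x j = 1 - x i := by
    have := Finset.add_sum_erase Finset.univ x (Finset.mem_univ i)
    rw [hsum] at this
    linarith
  have hrest_nn : ∀ j ∈ Finset.univ.erase i, 0 ≤ x j := fun j _ => hnn j
  have hrest_le : ∀ j ∈ Finset.univ.erase i, x j ≤ 1 / 3 := by
    intro j hj
    have hle : x j ≤ ∑ k ∈ Finset.univ.erase i, x k :=
      Finset.single_le_sum hrest_nn hj
    rw [hsplit] at hle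
    linarith
  -- key: x j ^ α ≥ (1 + (1-α)) * x j for j ≠ i
  have hkey : ∀ j ∈ Finset.univ.erase i, (1 + 1 * (1 - α)) * x j ≤ x j ^ α := by
    intro j hj
    rcases eq_or_lt_of_le (hnn j) with h | h
    · rw [← h, Real.zero_rpow (ne_of_gt hα0), mul_zero]
    · have h1 : (3 : ℝ) ^ (1 - α) ≤ x j ^ (α - 1) :=
        aux_rpow_bound (x j) α h (hrest_le j hj) hα1
      have h2 := aux_exp_bound α hα1
      have h3 : (1 + 1 * (1 - α)) * x j ≤ x j ^ (α - 1) * x j := by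
        have := le_trans h2 h1
        nlinarith
      calc (1 + 1 * (1 - α)) * x j ≤ x j ^ (α - 1) * x j := h3
      _ = x j ^ ((α - 1) + 1) := (Real.rpow_add_one (ne_of_gt h) (α - 1)).symm
      _ = x j ^ α := by ring_nf
  have hmain : (1 + 1 * (1 - α)) * (1 - x i) ≤ ∑ j ∈ Finset.univ.erase i, x j ^ α := by
    calc (1 + 1 * (1 - α)) * (1 - x i)
        = ∑ j ∈ Finset.univ.erase i, (1 + 1 * (1 - α)) * x j := by
          rw [← Finset.mul_sum, hsplit]
      _ ≤ ∑ j ∈ Finset.univ.erase i, x j ^ α := Finset.sum_le_sum hkey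
  refine ⟨hmain, ?_⟩
  have hxi1 : x i ≤ 1 := by
    have h0 : 0 ≤ ∑ j ∈ Finset.univ.erase i, x j := Finset.sum_nonneg hrest_nn
    rw [hsplit] at h0; linarith
  have hxia : x i ≤ x i ^ α := by
    have := Real.rpow_le_rpow_of_exponent_ge (by linarith : (0:ℝ) < x i) hxi1
      (le_of_lt hα1)
    rwa [Real.rpow_one] at this
  calc (1 + 1 * (1 - α)) * (1 - x i ^ α) ≤ (1 + 1 * (1 - α)) * (1 - x i) := by nlinarith
  _ ≤ _ := hmain
end

section
/- Let t > 1 and suppose y satisfies t - 1 ≤ y ≤ (1+ε)(t-1) for some ε > 0. Then log(t) ≤ log(y+1) ≤ (1+ε)·log(t). That is, a multiplicative (1+ε)-approximation of t-1 yields a multiplicative (1+ε)-approximation of log(t). -/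
theorem log_mult_approx (t y ε : ℝ) (ht : 1 < t) (hε : 0 < ε)
    (hy1 : t - 1 ≤ y) (hy2 : y ≤ (1 + ε) * (t - 1)) :
    Real.log t ≤ Real.log (y + 1) ∧ Real.log (y + 1) ≤ (1 + ε) * Real.log t := by
  have ht0 : 0 < t := lt_trans one_pos ht
  constructor
  · apply Real.log_le_log ht0; linarith
  · have h : y + 1 ≤ t ^ (1 + ε) := by
      have := one_add_mul_self_le_rpow_one_add (s := t - 1) (p := 1 + ε)
        (by linarith) (by linarith)
      have h2 : (1 : ℝ) + (t - 1) = t := by ring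
      rw [h2] at this
      linarith
    calc Real.log (y + 1) ≤ Real.log (t ^ (1 + ε)) :=
          Real.log_le_log (by linarith) h
      _ = (1 + ε) * Real.log t := Real.log_rpow ht0 _
end

section
/- Let x ∈ ℝ^n be a probability distribution whose smallest positive value is at least 1/m, where m ≥ n ≥ 2. Let 0 < ε < 1, set ν = ε/(4 log n log m) and β = 1 + ν/(16 log(1/ν)). Then 0 ≤ H_1(x) - H_β(x) ≤ ε, where H_1 is Shannon entropy and H_β(x) = log(∑_i x_i^β)/(1-β) is Rényi entropy of order β. -/
private lemma jensen_exp {n : ℕ} (w p : Fin n → ℝ) (hw : ∀ i, 0 ≤ w i)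
    (hs : ∑ i, w i = 1) :
    Real.exp (∑ i, w i * p i) ≤ ∑ i, w i * Real.exp (p i) := by
  have := convexOn_exp.map_sum_le (t := Finset.univ) (w := w) (p := p)
    (fun i _ => hw i) hs (fun i _ => Set.mem_univ _)
  simpa [smul_eq_mul] using this

private lemma exp_neg_le {u : ℝ} (hu : 0 ≤ u) :
    Real.exp (-u) ≤ 1 - u + u ^ 2 := by
  have h1 : u + 1 ≤ Real.exp u := Real.add_one_le_exp u
  have h2 : Real.exp (-u) * Real.exp u = 1 := by
    rw [← Real.exp_add]; simp
  have h3 : 0 < Real.exp u := Real.exp_pos u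
  nlinarith [Real.exp_pos (-u), sq_nonneg u, sq_nonneg (u - 1)]

theorem renyi_to_shannon_additive (n m : ℕ) (hn : 2 ≤ n) (hnm : n ≤ m)
    (x : Fin n → ℝ) (hx : ∀ i, 0 ≤ x i) (hsum : ∑ i, x i = 1)
    (hmin : ∀ i, x i ≠ 0 → 1 / (m : ℝ) ≤ x i)
    (ε ν β : ℝ) (hε : 0 < ε) (hε1 : ε < 1)
    (hν : ν = ε / (4 * Real.log n * Real.log m))
    (hβ : β = 1 + ν / (16 * Real.log (1 / ν))) :
    0 ≤ (-∑ i, x i * Real.log (x i)) - Real.log (∑ i, x i ^ β) / (1 - β) ∧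
    (-∑ i, x i * Real.log (x i)) - Real.log (∑ i, x i ^ β) / (1 - β) ≤ ε := by
  have hn1 : (1:ℝ) < n := by exact_mod_cast hn
  have hm1 : (1:ℝ) < m := lt_of_lt_of_le hn1 (by exact_mod_cast hnm)
  have hlogn : 0 < Real.log n := Real.log_pos hn1
  have hlogm : 0 < Real.log m := Real.log_pos hm1
  have hlognm : Real.log n ≤ Real.log m :=
    Real.log_le_log (by linarith) (by exact_mod_cast hnm)
  have hlog2 : (0.6931471803 : ℝ) < Real.log 2 := Real.log_two_gt_d9
  have hlog2n : Real.log 2 ≤ Real.log n :=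
    Real.log_le_log (by norm_num) (by exact_mod_cast hn)
  have hν0 : 0 < ν := by rw [hν]; positivity
  have hν1 : ν ≤ 17/32 := by
    have hD : (1.9 : ℝ) < 4 * Real.log n * Real.log m := by nlinarith
    rw [hν, div_le_iff₀ (by linarith)]
    nlinarith
  have hLν0 : 0 < Real.log (1/ν) := Real.log_pos (by rw [lt_div_iff₀ hν0]; linarith)
  set Lν := Real.log (1/ν) with hLνdef
  have hLν : 1/64 ≤ Lν := by
    have h1 : Real.log ν ≤ ν - 1 := Real.log_le_sub_one_of_pos hν0
    have h2 : Lν = -Real.log ν := by rw [hLνdef, one_div, Real.log_inv]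
    linarith
  set δ := β - 1 with hδdef
  have hδeq : δ = ν / (16 * Lν) := by rw [hδdef, hβ]; ring
  have hδ0 : 0 < δ := by rw [hδeq]; positivity
  have hβ0 : β ≠ 0 := by simp only [hδdef] at hδ0; intro h; rw [h] at hδ0; linarith
  have hx1 : ∀ i, x i ≤ 1 := by
    intro i
    calc x i = ∑ j ∈ {i}, x j := by simp
    _ ≤ ∑ j, x j := Finset.sum_le_sum_of_subset_of_nonneg (Finset.subset_univ _)
        (fun j _ _ => hx j)
    _ = 1 := hsum
  set L : Fin n → ℝ := fun i => if x i = 0 then 0 else -Real.log (x i) with hLdef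
  have hL0 : ∀ i, 0 ≤ L i := by
    intro i
    simp only [hLdef]
    split
    · exact le_refl 0
    · rename_i h
      have : Real.log (x i) ≤ 0 := Real.log_nonpos (hx i) (hx1 i)
      linarith
  have hLm : ∀ i, L i ≤ Real.log m := by
    intro i
    simp only [hLdef]
    split
    · exact le_of_lt hlogm
    · rename_i h
      have h1 : 1 / (m : ℝ) ≤ x i := hmin i h
      have h2 : Real.log (1 / (m : ℝ)) ≤ Real.log (x i) :=
        Real.log_le_log (by positivity) h1
      rw [one_div, Real.log_inv] at h2
      linarith
  set T := ∑ i, x i * Real.log (x i) with hTdef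
  have hTL : ∑ i, x i * L i = -T := by
    rw [hTdef, ← Finset.sum_neg_distrib]
    apply Finset.sum_congr rfl
    intro i _
    simp only [hLdef]
    split
    · rename_i h; rw [h]; ring
    · ring
  set S := ∑ i, x i ^ β with hSdef
  -- pointwise identity: x i ^ β = x i * exp (- δ * L i)
  have hpt : ∀ i, x i ^ β = x i * Real.exp (-(δ * L i)) := by
    intro i
    by_cases h : x i = 0
    · rw [h, Real.zero_rpow hβ0, zero_mul]
    · have hxpos : 0 < x i := lt_of_le_of_ne (hx i) (Ne.symm h)
      rw [Real.rpow_def_of_pos hxpos]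
      simp only [hLdef, if_neg h]
      have : Real.log (x i) * β = Real.log (x i) + -(δ * -Real.log (x i)) := by
        rw [hδdef]; ring
      rw [this, Real.exp_add, Real.exp_log hxpos]
  -- Lower bound : Jensen
  have hJ1 : Real.exp (∑ i, x i * (-(δ * L i))) ≤ ∑ i, x i * Real.exp (-(δ * L i)) :=
    jensen_exp x _ hx hsum
  have hsum1 : ∑ i, x i * (-(δ * L i)) = δ * T := by
    rw [Finset.mul_sum]
    apply Finset.sum_congr rfl
    intro i _
    simp only [hLdef]
    split
    · rename_i h; rw [h]; ring
    · ring
  have hS_ge : Real.exp (δ * T) ≤ S := by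
    rw [← hsum1]
    refine hJ1.trans_eq ?_
    rw [hSdef]
    exact (Finset.sum_congr rfl fun i _ => (hpt i).symm)
  have hS_pos : 0 < S := lt_of_lt_of_le (Real.exp_pos _) hS_ge
  have hlogS_ge : δ * T ≤ Real.log S := by
    rw [← Real.log_exp (δ * T)]
    exact Real.log_le_log (Real.exp_pos _) hS_ge
  -- Upper bound pieces
  have hptle : ∀ i, x i ^ β ≤ x i * (1 - δ * L i + δ ^ 2 * L i ^ 2) := by
    intro i
    rw [hpt i]
    apply mul_le_mul_of_nonneg_left _ (hx i)
    have := exp_neg_le (u := δ * L i) (mul_nonneg hδ0.le (hL0 i))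
    calc Real.exp (-(δ * L i)) ≤ 1 - δ * L i + (δ * L i) ^ 2 := this
    _ = 1 - δ * L i + δ ^ 2 * L i ^ 2 := by ring
  set M := ∑ i, x i * L i ^ 2 with hMdef
  have hS_le : S ≤ 1 + δ * T + δ ^ 2 * M := by
    calc S ≤ ∑ i, x i * (1 - δ * L i + δ ^ 2 * L i ^ 2) :=
        Finset.sum_le_sum fun i _ => hptle i
    _ = ∑ i, (x i - δ * (x i * L i) + δ ^ 2 * (x i * L i ^ 2)) :=
        Finset.sum_congr rfl fun i _ => by ring
    _ = (∑ i, x i) - δ * (∑ i, x i * L i) + δ ^ 2 * (∑ i, x i * L i ^ 2) := by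
        rw [Finset.sum_add_distrib, Finset.sum_sub_distrib, ← Finset.mul_sum, ← Finset.mul_sum]
    _ = 1 + δ * T + δ ^ 2 * M := by rw [hsum, hTL, ← hMdef]; ring
  have hlogS_le : Real.log S ≤ δ * T + δ ^ 2 * M := by
    have := Real.log_le_sub_one_of_pos hS_pos
    linarith
  have hM : M ≤ Real.log m * (-T) := by
    rw [hMdef, ← hTL, Finset.mul_sum]
    apply Finset.sum_le_sum
    intro i _
    have h1 : x i * L i ^ 2 = (x i * L i) * L i := by ring
    have h2 : Real.log ↑m * (x i * L i) = (x i * L i) * Real.log m := by ring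
    rw [h1, h2]
    exact mul_le_mul_of_nonneg_left (hLm i) (mul_nonneg (hx i) (hL0 i))
  -- entropy ≤ log n
  have hHn : -T ≤ Real.log n := by
    have hJ2 : Real.exp (∑ i, x i * L i) ≤ ∑ i, x i * Real.exp (L i) :=
      jensen_exp x L hx hsum
    have hR : ∑ i, x i * Real.exp (L i) ≤ (n : ℝ) := by
      calc ∑ i, x i * Real.exp (L i) ≤ ∑ _i : Fin n, (1:ℝ) := by
            apply Finset.sum_le_sum
            intro i _
            simp only [hLdef]
            split
            · rename_i h; rw [h]; simp
            · rename_i h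
              have hxpos : 0 < x i := lt_of_le_of_ne (hx i) (Ne.symm h)
              rw [Real.exp_neg, Real.exp_log hxpos]
              rw [mul_inv_cancel₀ h]
      _ = (n : ℝ) := by simp
    rw [Real.le_log_iff_exp_le (by positivity), ← hTL]
    exact hJ2.trans hR
  have hT0 : 0 ≤ -T := by
    rw [← hTL]
    exact Finset.sum_nonneg fun i _ => mul_nonneg (hx i) (hL0 i)
  -- assemble
  have h1β : 1 - β = -δ := by rw [hδdef]; ring
  have hdiv : Real.log S / (1 - β) = -(Real.log S / δ) := by
    rw [h1β, div_neg]
  clear_value S M T L δ Lν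
  constructor
  · rw [hdiv]
    have : T ≤ Real.log S / δ := by
      rw [le_div_iff₀ hδ0]
      linarith [hlogS_ge]
    linarith
  · rw [hdiv]
    have h2 : Real.log S / δ ≤ T + δ * M := by
      rw [div_le_iff₀ hδ0]
      nlinarith [hlogS_le]
    have h3 : δ * M ≤ δ * (Real.log m * Real.log n) := by
      apply mul_le_mul_of_nonneg_left _ hδ0.le
      calc M ≤ Real.log m * (-T) := hM
      _ ≤ Real.log m * Real.log n := mul_le_mul_of_nonneg_left hHn hlogm.le
    have h4 : δ * (Real.log m * Real.log n) = ε / (64 * Lν) := by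
      rw [hδeq, hν]
      field_simp
      ring
    have h5 : ε / (64 * Lν) ≤ ε :=
      div_le_self hε.le (by linarith)
    linarith
end
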